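/- arXiv:1204.6159 — 2 statements merged into one kernel-verified Lean document; each statement's English description precedes it below -/
import Mathlib

section
/- Let ν be a finite Borel measure on a set Ω with 0 < ν(Ω) < ∞, let a ∈ (0,1], M_P > 0 and G ≥ 0. Let v ∈ L²(Ω;ν) and suppose ‖v - v̄‖_{2;ν} ≤ M_P · G. Then, with v^a defined pointwise by the convention x^a = |x|^a·sign(x), one has ‖v^a - \overline{v^a}‖_{2;ν} ≤ 2^{1-a/2} · ν(Ω)^{(1-a)/2} · M_P^a · G^a. -/
open MeasureTheory Real

/-- Signed power: `x^q = |x|^q · sign x`. -/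
noncomputable def spow (x q : ℝ) : ℝ := Real.sign x * |x| ^ q

/-- Weighted `L^p` norm `‖f‖_{p;ν} = (∫ |f|^p dν)^{1/p}`. -/
noncomputable def wnorm {Ω : Type*} [MeasurableSpace Ω] (ν : Measure Ω) (p : ℝ)
    (f : Ω → ℝ) : ℝ := (∫ x, |f x| ^ p ∂ν) ^ (1 / p)

/-- Weighted mean value `f̄ = (∫ f dν)/ν(Ω)`. -/
noncomputable def wmean {Ω : Type*} [MeasurableSpace Ω] (ν : Measure Ω)
    (f : Ω → ℝ) : ℝ := (∫ x, f x ∂ν) / (ν Set.univ).toReal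

open scoped ENNReal

/-! The signed power `t ↦ t ^ a` is `a`-Hölder continuous with constant `2 ^ (1 - a)`: for
arguments of equal sign this is subadditivity of `t ↦ t ^ a`, for arguments of opposite sign
concavity. As the mean minimises the `L²` distance to constants,
`‖v^a - mean(v^a)‖₂ ≤ ‖v^a - (v̄)^a‖₂ ≤ 2^(1-a) ‖|v - v̄|^a‖₂`, and on a finite measure space
`‖|w|^a‖₂ = ‖w‖_{2a}^a ≤ ν(Ω)^((1-a)/2) ‖w‖₂^a` by Hölder's inequality. The constant
`2^(1-a)` obtained this way is at most `2^(1-a/2)`. -/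

section SignedPower

variable {a x y : ℝ}

lemma spow_neg (x a : ℝ) : spow (-x) a = -spow x a := by
  simp [spow, Real.sign_neg]

lemma spow_of_nonneg (ha : a ≠ 0) (hx : 0 ≤ x) : spow x a = x ^ a := by
  rcases hx.eq_or_lt with rfl | hx
  · simp [spow, Real.zero_rpow ha]
  · simp [spow, Real.sign_of_pos hx, abs_of_pos hx]

lemma abs_spow (ha : a ≠ 0) (x : ℝ) : |spow x a| = |x| ^ a := by
  rcases le_total 0 x with hx | hx
  · rw [spow_of_nonneg ha hx, abs_of_nonneg hx, abs_of_nonneg (Real.rpow_nonneg hx a)]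
  · rw [← abs_neg, ← spow_neg, spow_of_nonneg ha (neg_nonneg.2 hx), ← abs_of_nonpos hx,
      abs_of_nonneg (Real.rpow_nonneg (abs_nonneg x) a)]

lemma monotone_spow (ha : 0 < a) : Monotone (spow · a) :=
  monotone_of_odd_of_monotoneOn_nonneg (fun x => spow_neg x a) fun x hx y hy hxy => by
    simp only [spow_of_nonneg ha.ne' hx, spow_of_nonneg ha.ne' hy]
    exact Real.rpow_le_rpow hx hxy ha.le

lemma measurable_spow (ha : 0 < a) : Measurable (spow · a) :=
  (monotone_spow ha).measurable

lemma rpow_add_rpow_le_two_rpow_mul {p : ℝ} (hx : 0 ≤ x) (hy : 0 ≤ y) (hp0 : 0 ≤ p)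
    (hp1 : p ≤ 1) : x ^ p + y ^ p ≤ 2 ^ (1 - p) * (x + y) ^ p := by
  have hmid := (Real.concaveOn_rpow hp0 hp1).2 (Set.mem_Ici.2 hx) (Set.mem_Ici.2 hy)
    (by norm_num : (0 : ℝ) ≤ 1 / 2) (by norm_num : (0 : ℝ) ≤ 1 / 2) (by norm_num)
  simp only [smul_eq_mul] at hmid
  rw [← mul_add, ← mul_add, Real.mul_rpow (by norm_num) (add_nonneg hx hy),
    Real.div_rpow zero_le_one zero_le_two, Real.one_rpow] at hmid
  calc x ^ p + y ^ p ≤ 2 * (1 / 2 ^ p * (x + y) ^ p) := by linarith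
    _ = 2 ^ (1 - p) * (x + y) ^ p := by rw [Real.rpow_sub two_pos, Real.rpow_one]; ring

lemma spow_sub_spow_le (ha0 : 0 < a) (ha1 : a ≤ 1) (hyx : y ≤ x) :
    spow x a - spow y a ≤ 2 ^ (1 - a) * (x - y) ^ a := by
  have nonneg_case : ∀ {x y : ℝ}, 0 ≤ y → y ≤ x →
      spow x a - spow y a ≤ 2 ^ (1 - a) * (x - y) ^ a := fun {x y} hy hyx => by
    rw [spow_of_nonneg ha0.ne' hy, spow_of_nonneg ha0.ne' (hy.trans hyx)]
    have subadd := Real.rpow_add_le_add_rpow (sub_nonneg.2 hyx) hy ha0.le ha1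
    rw [sub_add_cancel] at subadd
    calc x ^ a - y ^ a ≤ (x - y) ^ a := by linarith
      _ ≤ 2 ^ (1 - a) * (x - y) ^ a := le_mul_of_one_le_left
          (Real.rpow_nonneg (sub_nonneg.2 hyx) a) (Real.one_le_rpow one_le_two (by linarith))
  rcases le_or_gt 0 y with hy | hy
  · exact nonneg_case hy hyx
  rcases le_or_gt x 0 with hx | hx
  · have := nonneg_case (neg_nonneg.2 hx) (neg_le_neg hyx)
    rwa [spow_neg, spow_neg, neg_sub_neg, neg_sub_neg] at this
  · have := rpow_add_rpow_le_two_rpow_mul hx.le (neg_nonneg.2 hy.le) ha0.le ha1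
    rwa [← spow_of_nonneg ha0.ne' hx.le, ← spow_of_nonneg ha0.ne' (neg_nonneg.2 hy.le),
      spow_neg, ← sub_eq_add_neg, ← sub_eq_add_neg] at this

lemma abs_spow_sub_spow_le (ha0 : 0 < a) (ha1 : a ≤ 1) (x y : ℝ) :
    |spow x a - spow y a| ≤ 2 ^ (1 - a) * |x - y| ^ a := by
  rcases le_total y x with h | h
  · rw [abs_of_nonneg (sub_nonneg.2 (monotone_spow ha0 h)), abs_of_nonneg (sub_nonneg.2 h)]
    exact spow_sub_spow_le ha0 ha1 h
  · rw [abs_sub_comm, abs_sub_comm x, abs_of_nonneg (sub_nonneg.2 (monotone_spow ha0 h)),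
      abs_of_nonneg (sub_nonneg.2 h)]
    exact spow_sub_spow_le ha0 ha1 h

end SignedPower

section Lp

variable {Ω : Type*} [MeasurableSpace Ω] {ν : Measure Ω}

lemma wnorm_nonneg (p : ℝ) (f : Ω → ℝ) : 0 ≤ wnorm ν p f :=
  Real.rpow_nonneg (integral_nonneg fun _ => Real.rpow_nonneg (abs_nonneg _) p) _

lemma wnorm_eq_toReal_eLpNorm {p : ℝ≥0∞} (hp0 : p ≠ 0) (hp : p ≠ ∞) {f : Ω → ℝ}
    (hf : MemLp f p ν) : wnorm ν p.toReal f = (eLpNorm f p ν).toReal := by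
  rw [hf.eLpNorm_eq_integral_rpow_norm hp0 hp, ENNReal.toReal_ofReal (by positivity)]
  simp [wnorm, Real.norm_eq_abs]

lemma wmean_eq_average (f : Ω → ℝ) : wmean ν f = ⨍ x, f x ∂ν := by
  rw [wmean, average_eq, smul_eq_mul, measureReal_def, div_eq_inv_mul]

lemma integral_sq_sub_average_le [IsFiniteMeasure ν] {f : Ω → ℝ} (hf : MemLp f 2 ν) (c : ℝ) :
    ∫ x, (f x - ⨍ y, f y ∂ν) ^ 2 ∂ν ≤ ∫ x, (f x - c) ^ 2 ∂ν := by
  set m := ⨍ y, f y ∂ν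
  have hfm : MemLp (fun x => f x - m) 2 ν := hf.sub (memLp_const m)
  have pythagoras :
      ∫ x, (f x - c) ^ 2 ∂ν = ∫ x, (f x - m) ^ 2 ∂ν + ν.real Set.univ * (m - c) ^ 2 := by
    calc ∫ x, (f x - c) ^ 2 ∂ν
        = ∫ x, ((f x - m) ^ 2 + 2 * (m - c) * (f x - m) + (m - c) ^ 2) ∂ν := by
          congr 1; funext x; ring
      _ = ∫ x, (f x - m) ^ 2 ∂ν + 2 * (m - c) * ∫ x, (f x - m) ∂ν
            + ν.real Set.univ * (m - c) ^ 2 := by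
          have hlin := hfm.integrable one_le_two
          have hquad : Integrable (fun x => (f x - m) ^ 2 + 2 * (m - c) * (f x - m)) ν :=
            hfm.integrable_sq.add (hlin.const_mul _)
          rw [integral_add hquad (integrable_const _),
            integral_add hfm.integrable_sq (hlin.const_mul _), integral_const_mul,
            integral_const, smul_eq_mul]
      _ = _ := by rw [integral_sub_average, mul_zero, add_zero]
  rw [pythagoras]
  exact le_add_of_nonneg_right (by positivity)

lemma wnorm_two_sub_wmean_le [IsFiniteMeasure ν] {f : Ω → ℝ} (hf : MemLp f 2 ν) (c : ℝ) :
    wnorm ν 2 (fun x => f x - wmean ν f) ≤ wnorm ν 2 (fun x => f x - c) := by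
  simp only [wnorm, Real.rpow_two, sq_abs, wmean_eq_average]
  exact Real.rpow_le_rpow (integral_nonneg fun _ => sq_nonneg _)
    (integral_sq_sub_average_le hf c) (by norm_num)

lemma eLpNorm_norm_rpow_le {F : Type*} [NormedAddCommGroup F] {f : Ω → F} {a : ℝ}
    (ha0 : 0 < a) (ha1 : a ≤ 1) (hf : AEStronglyMeasurable f ν) (p : ℝ≥0∞) :
    eLpNorm (fun x => ‖f x‖ ^ a) p ν ≤ eLpNorm f p ν ^ a * ν Set.univ ^ ((1 - a) / p.toReal) := by
  have hpa : p * ENNReal.ofReal a ≤ p :=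
    mul_le_of_le_one_right' (ENNReal.ofReal_le_one.2 ha1)
  rw [eLpNorm_norm_rpow f ha0]
  calc eLpNorm f (p * ENNReal.ofReal a) ν ^ a
      ≤ (eLpNorm f p ν * ν Set.univ ^ (1 / (p * ENNReal.ofReal a).toReal - 1 / p.toReal)) ^ a :=
        ENNReal.rpow_le_rpow (eLpNorm_le_eLpNorm_mul_rpow_measure_univ hpa hf) ha0.le
    _ = eLpNorm f p ν ^ a * ν Set.univ ^ ((1 - a) / p.toReal) := by
        rw [ENNReal.mul_rpow_of_nonneg _ _ ha0.le, ← ENNReal.rpow_mul, ENNReal.toReal_mul,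
          ENNReal.toReal_ofReal ha0.le]
        congr 2
        rcases eq_or_ne p.toReal 0 with hp | hp
        · simp [hp]
        · field_simp

lemma eLpNorm_spow_sub_spow_le {v : Ω → ℝ} {a : ℝ} (ha0 : 0 < a) (ha1 : a ≤ 1)
    (hv : AEStronglyMeasurable v ν) (c : ℝ) (p : ℝ≥0∞) :
    eLpNorm (fun x => spow (v x) a - spow c a) p ν ≤ ENNReal.ofReal (2 ^ (1 - a)) *
      (eLpNorm (fun x => v x - c) p ν ^ a * ν Set.univ ^ ((1 - a) / p.toReal)) := by
  refine (eLpNorm_le_mul_eLpNorm_of_ae_le_mul (c := 2 ^ (1 - a)) (g := fun x => ‖v x - c‖ ^ a)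
    (ae_of_all _ fun x => ?_) p).trans ?_
  · simpa [Real.norm_eq_abs, abs_of_nonneg (Real.rpow_nonneg (abs_nonneg _) a)]
      using abs_spow_sub_spow_le ha0 ha1 (v x) c
  · gcongr
    exact eLpNorm_norm_rpow_le ha0 ha1 (hv.sub aestronglyMeasurable_const) p

lemma wnorm_spow_sub_wmean_le [IsFiniteMeasure ν] {v : Ω → ℝ} {a : ℝ} (ha0 : 0 < a)
    (ha1 : a ≤ 1) (hv : MemLp v 2 ν) :
    wnorm ν 2 (fun x => spow (v x) a - wmean ν (fun x => spow (v x) a)) ≤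
      2 ^ (1 - a) * (ν Set.univ).toReal ^ ((1 - a) / 2) *
        wnorm ν 2 (fun x => v x - wmean ν v) ^ a := by
  set m := wmean ν v
  have hvm : MemLp (fun x => v x - m) 2 ν := hv.sub (memLp_const m)
  have hbound := eLpNorm_spow_sub_spow_le ha0 ha1 hv.aestronglyMeasurable m 2
  rw [ENNReal.toReal_ofNat] at hbound
  have hbound_ne_top : ENNReal.ofReal (2 ^ (1 - a)) *
      (eLpNorm (fun x => v x - m) 2 ν ^ a * ν Set.univ ^ ((1 - a) / 2)) ≠ ∞ := by
    have := hvm.eLpNorm_ne_top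
    finiteness
  have hdiff : MemLp (fun x => spow (v x) a - spow m a) 2 ν :=
    ⟨((measurable_spow ha0).comp_aemeasurable hv.aestronglyMeasurable.aemeasurable).sub
      aemeasurable_const |>.aestronglyMeasurable, hbound.trans_lt hbound_ne_top.lt_top⟩
  have hspow : MemLp (fun x => spow (v x) a) 2 ν := by
    convert hdiff.add (memLp_const (spow m a)) using 1
    ext x
    simp
  calc wnorm ν 2 (fun x => spow (v x) a - wmean ν (fun x => spow (v x) a))
      ≤ wnorm ν 2 (fun x => spow (v x) a - spow m a) := wnorm_two_sub_wmean_le hspow _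
    _ = (eLpNorm (fun x => spow (v x) a - spow m a) 2 ν).toReal := by
        simpa using wnorm_eq_toReal_eLpNorm two_ne_zero ENNReal.ofNat_ne_top hdiff
    _ ≤ _ := ENNReal.toReal_mono hbound_ne_top hbound
    _ = _ := by
        rw [ENNReal.toReal_mul, ENNReal.toReal_mul, ENNReal.toReal_ofReal (by positivity),
          ← ENNReal.toReal_rpow, ← ENNReal.toReal_rpow,
          ← wnorm_eq_toReal_eLpNorm two_ne_zero ENNReal.ofNat_ne_top hvm, ENNReal.toReal_ofNat]
        ring

end Lp

theorem stmt_2_general {Ω : Type*} [MeasurableSpace Ω] (ν : Measure Ω)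
    (hνfin : ν Set.univ < ⊤)
    (a : ℝ) (ha0 : 0 < a) (ha1 : a ≤ 1) (MP G : ℝ) (hMP : 0 < MP) (hG : 0 ≤ G)
    (v : Ω → ℝ) (hv : MemLp v 2 ν)
    (hpoin : wnorm ν 2 (fun x => v x - wmean ν v) ≤ MP * G) :
    wnorm ν 2 (fun x => spow (v x) a - wmean ν (fun x => spow (v x) a)) ≤
      2 ^ (1 - a / 2) * (ν Set.univ).toReal ^ ((1 - a) / 2) * MP ^ a * G ^ a := by
  have : IsFiniteMeasure ν := ⟨hνfin⟩
  calc _ ≤ 2 ^ (1 - a) * (ν Set.univ).toReal ^ ((1 - a) / 2) *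
        wnorm ν 2 (fun x => v x - wmean ν v) ^ a := wnorm_spow_sub_wmean_le ha0 ha1 hv
    _ ≤ 2 ^ (1 - a / 2) * (ν Set.univ).toReal ^ ((1 - a) / 2) * (MP * G) ^ a := by
        gcongr
        · exact Real.rpow_nonneg (wnorm_nonneg _ _) a
        · exact one_le_two
        · linarith
        · exact wnorm_nonneg _ _
    _ = _ := by rw [Real.mul_rpow hMP.le hG]; ring

/-- Per-function form of Lemma 5.1: if `‖v - v̄‖_{2;ν} ≤ M_P G` then
`‖v^a - \overline{v^a}‖_{2;ν} ≤ 2^{1-a/2} ν(Ω)^{(1-a)/2} M_P^a G^a`, for `a ∈ (0,1]`. -/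
theorem stmt_2 {Ω : Type*} [MeasurableSpace Ω] (ν : Measure Ω)
    (hν0 : 0 < ν Set.univ) (hνfin : ν Set.univ < ⊤)
    (a : ℝ) (ha0 : 0 < a) (ha1 : a ≤ 1) (MP G : ℝ) (hMP : 0 < MP) (hG : 0 ≤ G)
    (v : Ω → ℝ) (hv : MemLp v 2 ν)
    (hpoin : wnorm ν 2 (fun x => v x - wmean ν v) ≤ MP * G) :
    wnorm ν 2 (fun x => spow (v x) a - wmean ν (fun x => spow (v x) a)) ≤
      2 ^ (1 - a / 2) * (ν Set.univ).toReal ^ ((1 - a) / 2) * MP ^ a * G ^ a :=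
  stmt_2_general ν hνfin a ha0 ha1 MP G hMP hG v hv hpoin
end

section
/- Let m > 1. There exists a constant B > 0 such that the function v(x,t) = log(x²+2) · (1 + B^{-1}(m-1)t)^{-1/(m-1)}, defined for x ∈ ℝ and t > 0, satisfies, for every x ∈ ℝ with x ≠ 0 and every t > 0, the pointwise subsolution inequality ∂_t v(x,t) ≤ e^{|x|} · d/dx( e^{-|x|} · d/dx( v(x,t)^m ) ), where the x-derivatives on the right-hand side are taken of the function x ↦ e^{-|x|}·d/dx((v(x,t))^m) at the point x. -/
open Real

/-!
Separate variables: `v = L(x) G(t)` with `L = log(x² + 2)` and `G' = -B⁻¹ G^m`, while for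
`x ≠ 0` the weighted operator is `e^{|x|} (e^{-|x|} w)' = w' - sign x · w`. After dividing by
`G^m > 0` the claim becomes `sign x · (L^m)' - (L^m)'' ≤ L / B`. Dropping the nonnegative part
`m (m-1) L^{m-2} L'²` of `(L^m)''`, the left side is at most `m L^{m-1} (|L'| - L'')`, and
`|L'| - L'' ≤ 4 / √(x² + 2)` while `log y ≤ 2(m-1) y^{1/(2(m-1))}` gives
`L^{m-1} ≤ (2(m-1))^{m-1} √(x² + 2)`. So the left side is bounded by the constant
`K = 4m (2(m-1))^{m-1}`, and as `L ≥ log 2`, the choice `B = log 2 / K` works.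
-/

/-- The family of functions `v_B(x,t) = log(x²+2) · (1 + B⁻¹(m-1)t)^{-1/(m-1)}`. -/
noncomputable def subSolNeu (m B x t : ℝ) : ℝ :=
  Real.log (x ^ 2 + 2) * (1 + B⁻¹ * (m - 1) * t) ^ (-(m - 1)⁻¹)

theorem hasDerivAt_exp_neg_abs_mul {w : ℝ → ℝ} {w' x : ℝ} (hw : HasDerivAt w w' x)
    (hx : x ≠ 0) :
    HasDerivAt (fun y => exp (-|y|) * w y) (exp (-|x|) * (w' - SignType.sign x * w x)) x := by
  have hneg_abs : HasDerivAt (fun y => -|y|) (-(SignType.sign x : ℝ)) x :=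
    (hasDerivAt_abs hx).neg
  exact (hneg_abs.exp.mul hw).congr_deriv (by ring)

theorem exp_abs_mul_deriv_exp_neg_abs_mul {w : ℝ → ℝ} {w' x : ℝ} (hw : HasDerivAt w w' x)
    (hx : x ≠ 0) :
    exp |x| * deriv (fun y => exp (-|y|) * w y) x = w' - SignType.sign x * w x := by
  rw [(hasDerivAt_exp_neg_abs_mul hw hx).deriv, ← mul_assoc, ← exp_add, add_neg_cancel,
    exp_zero, one_mul]

theorem hasDerivAt_one_add_mul_rpow_neg_inv {m a t : ℝ} (hm : m ≠ 1)
    (ht : 0 < 1 + a * (m - 1) * t) :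
    HasDerivAt (fun τ => (1 + a * (m - 1) * τ) ^ (-(m - 1)⁻¹))
      (-a * ((1 + a * (m - 1) * t) ^ (-(m - 1)⁻¹)) ^ m) t := by
  have hm1 : m - 1 ≠ 0 := sub_ne_zero.2 hm
  have hlin : HasDerivAt (fun τ => 1 + a * (m - 1) * τ) (a * (m - 1)) t := by
    simpa using ((hasDerivAt_id t).const_mul (a * (m - 1))).const_add 1
  refine (hlin.rpow_const (Or.inl ht.ne')).congr_deriv ?_
  rw [← rpow_mul ht.le, show -(m - 1)⁻¹ - 1 = -(m - 1)⁻¹ * m by field_simp; ring]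
  field_simp

theorem hasDerivAt_log_sq_add_two (x : ℝ) :
    HasDerivAt (fun z => log (z ^ 2 + 2)) (2 * x / (x ^ 2 + 2)) x := by
  have hsq : HasDerivAt (fun z => z ^ 2 + 2) (2 * x) x := by
    simpa using (hasDerivAt_pow 2 x).add_const 2
  exact hsq.log (by positivity)

theorem hasDerivAt_two_mul_div_sq_add_two (x : ℝ) :
    HasDerivAt (fun z => 2 * z / (z ^ 2 + 2)) ((4 - 2 * x ^ 2) / (x ^ 2 + 2) ^ 2) x := by
  have hlin : HasDerivAt (fun z => 2 * z) 2 x := by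
    simpa using (hasDerivAt_id x).const_mul 2
  have hsq : HasDerivAt (fun z => z ^ 2 + 2) (2 * x) x := by
    simpa using (hasDerivAt_pow 2 x).add_const 2
  exact (hlin.div hsq (by positivity)).congr_deriv (by ring)

theorem hasDerivAt_log_sq_add_two_rpow (p x : ℝ) :
    HasDerivAt (fun z => log (z ^ 2 + 2) ^ p)
      (2 * x / (x ^ 2 + 2) * p * log (x ^ 2 + 2) ^ (p - 1)) x :=
  (hasDerivAt_log_sq_add_two x).rpow_const
    (Or.inl (log_pos (by nlinarith [sq_nonneg x] : (1 : ℝ) < x ^ 2 + 2)).ne')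

theorem hasDerivAt_deriv_log_sq_add_two_rpow (p x : ℝ) :
    HasDerivAt (fun z => 2 * z / (z ^ 2 + 2) * p * log (z ^ 2 + 2) ^ (p - 1))
      ((4 - 2 * x ^ 2) / (x ^ 2 + 2) ^ 2 * p * log (x ^ 2 + 2) ^ (p - 1)
        + 2 * x / (x ^ 2 + 2) * p * (2 * x / (x ^ 2 + 2) * (p - 1) * log (x ^ 2 + 2) ^ (p - 2)))
      x := by
  have h := ((hasDerivAt_two_mul_div_sq_add_two x).mul_const p).mul
    (hasDerivAt_log_sq_add_two_rpow (p - 1) x)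
  rwa [sub_sub, one_add_one_eq_two] at h

theorem two_abs_div_sub_le (x : ℝ) :
    2 * |x| / (x ^ 2 + 2) - (4 - 2 * x ^ 2) / (x ^ 2 + 2) ^ 2 ≤ 4 / √(x ^ 2 + 2) := by
  obtain ⟨r, hr0, hr⟩ : ∃ r, 0 < r ∧ |x| ^ 2 + 2 = r ^ 2 :=
    ⟨√(x ^ 2 + 2), by positivity, by rw [sq_abs, sq_sqrt (by positivity)]⟩
  rw [← sq_abs x, hr, sqrt_sq hr0.le]
  have habs : |x| ≤ r := by nlinarith [abs_nonneg x]
  have hr1 : 1 ≤ r := by nlinarith [abs_nonneg x]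
  rw [div_sub_div _ _ (by positivity) (by positivity), div_le_div_iff₀ (by positivity) hr0,
    show |x| ^ 2 = r ^ 2 - 2 by linarith]
  nlinarith [mul_le_mul_of_nonneg_left habs (by positivity : (0 : ℝ) ≤ r ^ 5),
    pow_le_pow_right₀ hr1 (by norm_num : 5 ≤ 6)]

theorem log_rpow_le_mul_sqrt {p y : ℝ} (hp : 0 < p) (hy : 1 ≤ y) :
    log y ^ p ≤ (2 * p) ^ p * √y := by
  have hy0 : 0 ≤ y := by linarith
  have hε : 0 < (2 * p)⁻¹ := by positivity
  calc log y ^ p ≤ (y ^ (2 * p)⁻¹ / (2 * p)⁻¹) ^ p :=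
        rpow_le_rpow (log_nonneg hy) (log_le_rpow_div hy0 hε) hp.le
    _ = (2 * p) ^ p * √y := by
        rw [div_rpow (rpow_nonneg hy0 _) hε.le, ← rpow_mul hy0, inv_rpow (by positivity),
          div_inv_eq_mul, sqrt_eq_rpow, mul_comm, show (2 * p)⁻¹ * p = 1 / 2 by field_simp]

theorem mul_log_sq_add_two_rpow_mul_le {m : ℝ} (hm : 1 < m) (x : ℝ) :
    m * log (x ^ 2 + 2) ^ (m - 1) * (2 * |x| / (x ^ 2 + 2) - (4 - 2 * x ^ 2) / (x ^ 2 + 2) ^ 2)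
      ≤ 4 * m * (2 * (m - 1)) ^ (m - 1) := by
  have hr : 0 < √(x ^ 2 + 2) := by positivity
  have hL : 0 ≤ log (x ^ 2 + 2) ^ (m - 1) := rpow_nonneg (log_nonneg (by nlinarith)) _
  calc _ ≤ m * log (x ^ 2 + 2) ^ (m - 1) * (4 / √(x ^ 2 + 2)) :=
        mul_le_mul_of_nonneg_left (two_abs_div_sub_le x) (by positivity)
    _ ≤ m * ((2 * (m - 1)) ^ (m - 1) * √(x ^ 2 + 2)) * (4 / √(x ^ 2 + 2)) := by
        gcongr
        exact log_rpow_le_mul_sqrt (by linarith) (by nlinarith)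
    _ = 4 * m * (2 * (m - 1)) ^ (m - 1) := by
        field_simp

noncomputable def subSolConst (m : ℝ) : ℝ := log 2 / (4 * m * (2 * (m - 1)) ^ (m - 1))

theorem subSolConst_pos {m : ℝ} (hm : 1 < m) : 0 < subSolConst m := by
  have : 0 < (2 * (m - 1)) ^ (m - 1) := rpow_pos_of_pos (by linarith) _
  exact div_pos (log_pos one_lt_two) (by positivity)

theorem le_log_div_subSolConst {m : ℝ} (hm : 1 < m) (x : ℝ) :
    4 * m * (2 * (m - 1)) ^ (m - 1) ≤ log (x ^ 2 + 2) / subSolConst m := by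
  have hpow : 0 < (2 * (m - 1)) ^ (m - 1) := rpow_pos_of_pos (by linarith) _
  have hlog : log 2 ≤ log (x ^ 2 + 2) := log_le_log two_pos (by nlinarith [sq_nonneg x])
  rw [subSolConst, div_div_eq_mul_div, le_div_iff₀ (log_pos one_lt_two),
    mul_comm (log (x ^ 2 + 2))]
  exact mul_le_mul_of_nonneg_left hlog (by positivity)

theorem sign_mul_sub_le_log_div_subSolConst {m : ℝ} (hm : 1 < m) (x : ℝ) :
    SignType.sign x * (2 * x / (x ^ 2 + 2) * m * log (x ^ 2 + 2) ^ (m - 1))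
      - ((4 - 2 * x ^ 2) / (x ^ 2 + 2) ^ 2 * m * log (x ^ 2 + 2) ^ (m - 1)
        + 2 * x / (x ^ 2 + 2) * m * (2 * x / (x ^ 2 + 2) * (m - 1) * log (x ^ 2 + 2) ^ (m - 2)))
      ≤ log (x ^ 2 + 2) / subSolConst m := by
  have hsign : SignType.sign x * (2 * x / (x ^ 2 + 2)) = 2 * |x| / (x ^ 2 + 2) := by
    rw [← mul_div_assoc, mul_left_comm, sign_mul_self]
  have hconv : 0 ≤ m * (m - 1) * (2 * x / (x ^ 2 + 2)) ^ 2 * log (x ^ 2 + 2) ^ (m - 2) := by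
    have : 0 ≤ log (x ^ 2 + 2) ^ (m - 2) := rpow_nonneg (log_nonneg (by nlinarith)) _
    have : 0 < m - 1 := by linarith
    positivity
  have hmain := (mul_log_sq_add_two_rpow_mul_le hm x).trans (le_log_div_subSolConst hm x)
  calc _ = m * log (x ^ 2 + 2) ^ (m - 1)
          * (2 * |x| / (x ^ 2 + 2) - (4 - 2 * x ^ 2) / (x ^ 2 + 2) ^ 2)
          - m * (m - 1) * (2 * x / (x ^ 2 + 2)) ^ 2 * log (x ^ 2 + 2) ^ (m - 2) := by
        rw [← hsign]; ring
    _ ≤ log (x ^ 2 + 2) / subSolConst m := by linarith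

/-- Counterexample to `L^∞` regularization for the Neumann
problem with weights `ρ_ν = ρ_μ = e^{-|x|}` on `ℝ`: for a suitable `B > 0` the
function `v(x,t) = log(x²+2)(1 + B⁻¹(m-1)t)^{-1/(m-1)}` satisfies, away from
`x = 0`, the pointwise subsolution inequality for
`u_t = e^{|x|}(e^{-|x|}(u^m)_x)_x`. -/
theorem stmt_11 (m : ℝ) (hm : 1 < m) :
    ∃ B : ℝ, 0 < B ∧ ∀ x : ℝ, x ≠ 0 → ∀ t : ℝ, 0 < t →
      deriv (fun τ => subSolNeu m B x τ) t ≤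
        Real.exp |x| *
          deriv
            (fun y => Real.exp (-|y|) * deriv (fun z => (subSolNeu m B z t) ^ m) y)
            x := by
  set B := subSolConst m
  have hB : 0 < B := subSolConst_pos hm
  refine ⟨B, hB, fun x hx t ht => ?_⟩
  have hbt : 0 < 1 + B⁻¹ * (m - 1) * t := by
    have hm1 : 0 < m - 1 := by linarith
    positivity
  set G := (1 + B⁻¹ * (m - 1) * t) ^ (-(m - 1)⁻¹)
  have hGm : 0 < G ^ m := rpow_pos_of_pos (rpow_pos_of_pos hbt _) _
  have htime : HasDerivAt (fun τ => subSolNeu m B x τ) (log (x ^ 2 + 2) * (-B⁻¹ * G ^ m)) t :=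
    (hasDerivAt_one_add_mul_rpow_neg_inv hm.ne' hbt).const_mul _
  have hflux (y : ℝ) : deriv (fun z => subSolNeu m B z t ^ m) y
      = 2 * y / (y ^ 2 + 2) * m * log (y ^ 2 + 2) ^ (m - 1) * G ^ m := by
    have hsep : (fun z => subSolNeu m B z t ^ m) = fun z => log (z ^ 2 + 2) ^ m * G ^ m := by
      funext z
      exact mul_rpow (log_nonneg (by nlinarith [sq_nonneg z])) (rpow_nonneg hbt.le _)
    rw [hsep, ((hasDerivAt_log_sq_add_two_rpow m y).mul_const _).deriv]
  simp only [htime.deriv, hflux]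
  rw [exp_abs_mul_deriv_exp_neg_abs_mul
    ((hasDerivAt_deriv_log_sq_add_two_rpow m x).mul_const _) hx]
  linear_combination mul_le_mul_of_nonneg_right (sign_mul_sub_le_log_div_subSolConst hm x) hGm.le
end
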